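/- arXiv:2304.03757 — 2 statements merged into one kernel-verified Lean document; each statement's English description precedes it below -/
import Mathlib

section
/- For every integer t > 2, the class T_t of thresholds over [t−1] is properly list replicable with proper list replicability number exactly 2: List_p(T_t) = 2. -/
open scoped ENNReal

namespace Replicability

variable {X : Type*}

/-- A labeled sample of size `n`: `n` pairs of a domain point and a boolean label
(`true` encodes `+1` and `false` encodes `-1`). -/
abbrev Sample (X : Type*) (n : ℕ) := Fin n → X × Bool

/-- A (possibly randomized) learning rule: for every sample size `n` it maps a sample of
size `n` to a probability distribution over output predictors `X → Bool`. -/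
abbrev LearningRule (X : Type*) := (n : ℕ) → Sample X n → PMF (X → Bool)

/-- The population loss `L_D(h) = Pr_{(x,y) ~ D}[h x ≠ y]` of a predictor `h` with
respect to a distribution `D` over labeled examples. -/
noncomputable def popLoss (D : PMF (X × Bool)) (h : X → Bool) : ℝ≥0∞ :=
  D.toOuterMeasure {p | h p.1 ≠ p.2}

/-- `D` is realizable by the hypothesis class `H`: `inf_{h ∈ H} L_D(h) = 0`. -/
def Realizable (H : Set (X → Bool)) (D : PMF (X × Bool)) : Prop :=
  ∀ ε : ℝ≥0∞, 0 < ε → ∃ h ∈ H, popLoss D h < ε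

/-- The probability that, for an i.i.d. sample `S ~ D^n`, the (random) output of the
learning rule `A` on `S` lands in the set `E` of predictors. -/
noncomputable def outProb (D : PMF (X × Bool)) {n : ℕ}
    (A : Sample X n → PMF (X → Bool)) (E : Set (X → Bool)) : ℝ≥0∞ :=
  ∑' S : Sample X n, (∏ i, D (S i)) * (A S).toOuterMeasure E

/-- `A` is an `(ε, ρ)`-globally stable learner for `H`: there is a sample size `n` such
that for every `H`-realizable `D` some predictor `h` with `L_D(h) ≤ ε` is output with
probability at least `ρ`. -/
def IsGSLearner (H : Set (X → Bool)) (A : LearningRule X) (ε ρ : ℝ) : Prop :=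
  ∃ n : ℕ, ∀ D : PMF (X × Bool), Realizable H D →
    ∃ h : X → Bool, popLoss D h ≤ ENNReal.ofReal ε ∧
      ENNReal.ofReal ρ ≤ outProb D (A n) {h}

/-- The global stability parameter `ρ(H)`. -/
noncomputable def globalStability (H : Set (X → Bool)) : ℝ :=
  sSup {ρ : ℝ | ρ ∈ Set.Icc (0 : ℝ) 1 ∧
    ∀ ε : ℝ, 0 < ε → ∃ A : LearningRule X, IsGSLearner H A ε ρ}

/-- The global stability parameter `ρ_F(H)` of `H` with respect to the output class `F`:
only learners all of whose outputs lie in `F` are considered. -/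
noncomputable def globalStabilityIn (F H : Set (X → Bool)) : ℝ :=
  sSup {ρ : ℝ | ρ ∈ Set.Icc (0 : ℝ) 1 ∧
    ∀ ε : ℝ, 0 < ε → ∃ A : LearningRule X,
      (∀ n S, (A n S).support ⊆ F) ∧ IsGSLearner H A ε ρ}

/-- `A` is an `(ε, L)`-list replicable learner for `H`: for every `δ > 0` there is a
sample size `n` such that for every `H`-realizable `D` there are predictors
`h_1, …, h_L`, each of population loss at most `ε`, such that the output of `A` is one
of them with probability at least `1 - δ`. -/
def IsListLearner (H : Set (X → Bool)) (A : LearningRule X) (ε : ℝ) (L : ℕ) : Prop :=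
  ∀ δ : ℝ, 0 < δ → ∃ n : ℕ, ∀ D : PMF (X × Bool), Realizable H D →
    ∃ hs : Fin L → (X → Bool),
      (∀ ℓ, popLoss D (hs ℓ) ≤ ENNReal.ofReal ε) ∧
      ENNReal.ofReal (1 - δ) ≤ outProb D (A n) (Set.range hs)

/-- The list replicability number `List(H)` (`⊤` if no finite list size works). -/
noncomputable def listNumber (H : Set (X → Bool)) : ℕ∞ :=
  sInf {L : ℕ∞ | ∃ l : ℕ, L = l ∧
    ∀ ε : ℝ, 0 < ε → ∃ A : LearningRule X, IsListLearner H A ε l}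

/-- `A` is a proper learning rule for `H`: every output lies in `H`. -/
def IsProper (H : Set (X → Bool)) (A : LearningRule X) : Prop :=
  ∀ n S, ((A n S).support : Set (X → Bool)) ⊆ H

/-- `A` is a proper `(ε, L)`-list replicable learner for `H`: a proper learning rule
whose lists consist of hypotheses from `H`. -/
def IsProperListLearner (H : Set (X → Bool)) (A : LearningRule X) (ε : ℝ) (L : ℕ) : Prop :=
  IsProper H A ∧
  ∀ δ : ℝ, 0 < δ → ∃ n : ℕ, ∀ D : PMF (X × Bool), Realizable H D →
    ∃ hs : Fin L → (X → Bool),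
      (∀ ℓ, hs ℓ ∈ H) ∧
      (∀ ℓ, popLoss D (hs ℓ) ≤ ENNReal.ofReal ε) ∧
      ENNReal.ofReal (1 - δ) ≤ outProb D (A n) (Set.range hs)

/-- The proper list replicability number `List_p(H)` (`⊤` if no finite list size works). -/
noncomputable def properListNumber (H : Set (X → Bool)) : ℕ∞ :=
  sInf {L : ℕ∞ | ∃ l : ℕ, L = l ∧
    ∀ ε : ℝ, 0 < ε → ∃ A : LearningRule X, IsProperListLearner H A ε l}

/-- `H` shatters the finite set `s`. -/
def Shatters (H : Set (X → Bool)) (s : Finset X) : Prop :=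
  ∀ σ : X → Bool, ∃ h ∈ H, ∀ x ∈ s, h x = σ x

/-- The VC dimension of `H`, as an extended natural number. -/
noncomputable def VCDim (H : Set (X → Bool)) : ℕ∞ :=
  sSup {d : ℕ∞ | ∃ s : Finset X, Shatters H s ∧ d = s.card}

/-- `H` shatters a complete binary mistake tree of depth `d`: there is an assignment of
a point to every binary string (only strings of length `< d` matter) such that every
branch `σ ∈ Bool^d` is realized by some `h ∈ H`. -/
def LdimGe (H : Set (X → Bool)) (d : ℕ) : Prop :=
  ∃ tree : List Bool → X, ∀ σ : Fin d → Bool, ∃ h ∈ H,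
    ∀ j : Fin d, h (tree (List.ofFn fun i : Fin j => σ (Fin.castLE j.isLt.le i))) = σ j

/-- The Littlestone dimension of `H`, as an extended natural number. -/
noncomputable def Ldim (H : Set (X → Bool)) : ℕ∞ :=
  sSup {d : ℕ∞ | ∃ k : ℕ, d = k ∧ LdimGe H k}

/-- The projection of `H` to the finite set `s` contains a hollow star centered at some
pattern `f`: `f` is not realized by `H` on `s`, but each of the `|s|` patterns obtained
from `f` by flipping one coordinate is. -/
def HasHollowStar (H : Set (X → Bool)) (s : Finset X) : Prop :=
  ∃ f : X → Bool,
    (¬ ∃ h ∈ H, ∀ x ∈ s, h x = f x) ∧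
    ∀ x₀ ∈ s, ∃ h ∈ H, h x₀ = !(f x₀) ∧ ∀ x ∈ s, x ≠ x₀ → h x = f x

/-- The hollow star number of `H`, as an extended natural number. -/
noncomputable def HSdim (H : Set (X → Bool)) : ℕ∞ :=
  sSup {d : ℕ∞ | ∃ s : Finset X, HasHollowStar H s ∧ d = s.card}

/-- The class of `t` thresholds `τ_i : [t-1] → {±1}`, `i ∈ [t]`, where (identifying
`[t-1]` with `Fin (t-1)` and `[t]` with `Fin t` via `x ↦ x + 1`) `τ_i x = +1` iff `x ≥ i`. -/
def thresholdClass (t : ℕ) : Set (Fin (t - 1) → Bool) :=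
  {h | ∃ i : Fin t, h = fun x : Fin (t - 1) => decide ((i : ℕ) ≤ (x : ℕ))}

/-- The class of `s` singletons over `[s]`: `h_i x = +1` iff `x = i`. -/
def singletonClass (s : ℕ) : Set (Fin s → Bool) :=
  {h | ∃ i : Fin s, h = fun x => decide (x = i)}

/-- The empirical loss of `h` on the sample `S`. -/
noncomputable def empLoss {n : ℕ} (S : Sample X n) (h : X → Bool) : ℝ :=
  (Finset.univ.filter fun i => h (S i).1 ≠ (S i).2).card / n

/-- The sample `S` is consistent with `H`. -/
def Consistent (H : Set (X → Bool)) {n : ℕ} (S : Sample X n) : Prop :=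
  ∃ h ∈ H, ∀ i, h (S i).1 = (S i).2

/-- `A` is an `ε'`-empirical learner for `H`: for all large enough sample sizes, on every
sample consistent with `H` and every internal randomness, the output has empirical loss
at most `ε'`. -/
def IsEmpiricalLearner (H : Set (X → Bool)) (A : LearningRule X) (ε' : ℝ) : Prop :=
  ∃ n₀ : ℕ, ∀ n > n₀, ∀ S : Sample X n, Consistent H S →
    ∀ f ∈ (A n S).support, empLoss S f ≤ ε'

/-- An instability witness of size `k` for `H` with respect to the output class `F`
(`true` encodes the label `+1` and `false` the label `-1`). -/
def IsInstabilityWitness (H F : Set (X → Bool)) (k : ℕ)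
    (W : Fin k × Bool → X × Bool) : Prop :=
  (∃ xy : X × Bool, ∀ σ : Fin k → Bool, ∃ h ∈ H, h xy.1 = xy.2 ∧
      ∀ j : Fin k, W (j, σ j) ≠ xy ∧ h (W (j, σ j)).1 = (W (j, σ j)).2) ∧
  (∃ F' : Fin (k + 1) → Set (X → Bool),
      (∀ i, F' i ⊆ F) ∧
      (∀ f ∈ F, ∃! i, f ∈ F' i) ∧
      (∀ j : Fin k, ∀ f₀ ∈ F' 0, f₀ (W (j, false)).1 ≠ (W (j, false)).2) ∧
      (∀ j : Fin k, ∀ f ∈ F' j.succ, f (W (j, true)).1 ≠ (W (j, true)).2))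

/-- The total variation distance between two distributions over a countable set. -/
noncomputable def tvDist {α : Type*} (p q : PMF α) : ℝ :=
  (∑' a, |(p a).toReal - (q a).toReal|) / 2


/-!
Upper bound. For every `i < t` the learner estimates the mass of the negatively labelled
examples at or beyond `i`, and adds up ramps that are `1` where this estimate is below `η` and
`0` where it is above `ε - η`; it outputs the threshold `t - ⌈c⌉` for this soft count `c`.
Tails beyond a perfect threshold `m` vanish and count `1`, tails of mass `≥ ε` count `0`, so
`t - ⌈c⌉` lies between the first index with tail `< ε` and `m`, where every threshold has loss
`< ε`. Each ramp is Lipschitz, so when all `t` estimates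
are `η`-accurate (probability `≥ 1 - δ` by Chebyshev's inequality and a union bound) `c` is
within `1/2` of the soft count of the true tail masses, and `⌈c⌉` takes one of two values that
depend on the distribution alone.

Lower bound. A `1`-list learner has, at every realizable distribution, one output of probability
`≥ 3/4`. The probability of a fixed output is `n`-Lipschitz in the `ℓ¹` distance between
distributions, so this output does not change along the mixtures of two distributions fitted by
a common threshold. Walking through the point masses on `(0, +)`, `(1, +)`, `(0, -)`, `(1, -)`
then forces one threshold to label `0` positive and `1` negative.
-/

open Finset

section PMF

variable {α : Type*}

lemma toOuterMeasure_le_one (p : PMF α) (s : Set α) : p.toOuterMeasure s ≤ 1 :=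
  (p.toOuterMeasure_apply s).trans_le
    ((ENNReal.tsum_le_tsum fun x => Set.indicator_le_self s p x).trans_eq p.tsum_coe)

lemma toReal_pmf_add_le_one (p : PMF α) {a b : α} (hab : a ≠ b) :
    (p a).toReal + (p b).toReal ≤ 1 := by
  classical
  have hle : p a + p b ≤ 1 := by
    rw [← p.tsum_coe, ← sum_pair hab]
    exact ENNReal.sum_le_tsum _
  rw [← ENNReal.toReal_add (p.apply_ne_top a) (p.apply_ne_top b)]
  exact ENNReal.toReal_le_of_le_ofReal zero_le_one (by simpa using hle)

lemma sum_toReal_pmf_eq_one [Fintype α] (p : PMF α) : ∑ a, (p a).toReal = 1 := by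
  have h := p.tsum_coe
  rw [tsum_fintype] at h
  rw [← ENNReal.toReal_sum fun a _ => p.apply_ne_top a, h, ENNReal.toReal_one]

end PMF

section SampleWeight

variable {Z : Type*}

noncomputable def sampleWeight (D : PMF Z) {n : ℕ} (S : Fin n → Z) : ℝ :=
  ∏ k, (D (S k)).toReal

lemma sampleWeight_nonneg (D : PMF Z) {n : ℕ} (S : Fin n → Z) : 0 ≤ sampleWeight D S :=
  prod_nonneg fun _ _ => ENNReal.toReal_nonneg

lemma sampleWeight_cons (D : PMF Z) {n : ℕ} (z : Z) (S : Fin n → Z) :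
    sampleWeight D (Fin.cons z S : Fin (n + 1) → Z) = (D z).toReal * sampleWeight D S := by
  simp [sampleWeight, Fin.prod_univ_succ]

lemma prod_pmf_eq_ofReal_sampleWeight (D : PMF Z) {n : ℕ} (S : Fin n → Z) :
    ∏ k, D (S k) = ENNReal.ofReal (sampleWeight D S) := by
  rw [sampleWeight, ← ENNReal.toReal_prod,
    ENNReal.ofReal_toReal (ENNReal.prod_ne_top fun k _ => D.apply_ne_top _)]

variable [Fintype Z] (D D' : PMF Z)

lemma sum_fin_succ_pi {M : Type*} [AddCommMonoid M] {n : ℕ} (G : (Fin (n + 1) → Z) → M) :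
    ∑ S, G S = ∑ z, ∑ S : Fin n → Z, G (Fin.cons z S) :=
  (Fintype.sum_equiv (Fin.consEquiv fun _ => Z) _ _ fun _ => rfl).symm.trans
    (Fintype.sum_prod_type _)

lemma sum_sampleWeight (n : ℕ) : ∑ S : Fin n → Z, sampleWeight D S = 1 := by
  induction n with
  | zero => simp [sampleWeight]
  | succ n ih =>
    simp [sum_fin_succ_pi, sampleWeight_cons, ← mul_sum, ih, sum_toReal_pmf_eq_one]

lemma sum_sampleWeight_mul_sum (f : Z → ℝ) (n : ℕ) :
    ∑ S : Fin n → Z, sampleWeight D S * ∑ k, f (S k) = n * ∑ z, (D z).toReal * f z := by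
  induction n with
  | zero => simp
  | succ n ih =>
    have expand : ∀ (z : Z) (S : Fin n → Z),
        sampleWeight D (Fin.cons z S : Fin (n + 1) → Z)
            * ∑ k, f ((Fin.cons z S : Fin (n + 1) → Z) k)
          = (D z).toReal * f z * sampleWeight D S
            + (D z).toReal * (sampleWeight D S * ∑ k, f (S k)) := by
      intro z S
      rw [sampleWeight_cons, Fin.sum_univ_succ]
      simp only [Fin.cons_zero, Fin.cons_succ]
      ring
    simp only [sum_fin_succ_pi, expand, sum_add_distrib, ← mul_sum, sum_sampleWeight, ih,
      ← sum_mul, sum_toReal_pmf_eq_one]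
    push_cast
    ring

lemma sum_sampleWeight_mul_sum_sq (f : Z → ℝ) (hf : ∑ z, (D z).toReal * f z = 0) (n : ℕ) :
    ∑ S : Fin n → Z, sampleWeight D S * (∑ k, f (S k)) ^ 2
      = n * ∑ z, (D z).toReal * f z ^ 2 := by
  induction n with
  | zero => simp
  | succ n ih =>
    have expand : ∀ (z : Z) (S : Fin n → Z),
        sampleWeight D (Fin.cons z S : Fin (n + 1) → Z)
            * (∑ k, f ((Fin.cons z S : Fin (n + 1) → Z) k)) ^ 2
          = (D z).toReal * f z ^ 2 * sampleWeight D S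
            + 2 * ((D z).toReal * f z) * (sampleWeight D S * ∑ k, f (S k))
            + (D z).toReal * (sampleWeight D S * (∑ k, f (S k)) ^ 2) := by
      intro z S
      rw [sampleWeight_cons, Fin.sum_univ_succ]
      simp only [Fin.cons_zero, Fin.cons_succ]
      ring
    simp only [sum_fin_succ_pi, expand, sum_add_distrib, ← mul_sum, sum_sampleWeight,
      sum_sampleWeight_mul_sum, ih, ← sum_mul, hf, sum_toReal_pmf_eq_one]
    push_cast
    ring

lemma sum_abs_sampleWeight_sub_le (n : ℕ) :
    ∑ S : Fin n → Z, |sampleWeight D S - sampleWeight D' S|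
      ≤ n * ∑ z, |(D z).toReal - (D' z).toReal| := by
  induction n with
  | zero => simp [sampleWeight]
  | succ n ih =>
    have hterm : ∀ (z : Z) (S : Fin n → Z),
        |sampleWeight D (Fin.cons z S : Fin (n + 1) → Z)
            - sampleWeight D' (Fin.cons z S : Fin (n + 1) → Z)|
          ≤ (D z).toReal * |sampleWeight D S - sampleWeight D' S|
            + |(D z).toReal - (D' z).toReal| * sampleWeight D' S := by
      intro z S
      rw [sampleWeight_cons, sampleWeight_cons]
      calc _ = |(D z).toReal * (sampleWeight D S - sampleWeight D' S)
              + ((D z).toReal - (D' z).toReal) * sampleWeight D' S| := by ring_nf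
        _ ≤ _ := by
          refine (abs_add_le _ _).trans_eq ?_
          rw [abs_mul, abs_mul, abs_of_nonneg ENNReal.toReal_nonneg,
            abs_of_nonneg (sampleWeight_nonneg D' S)]
    calc _ ≤ ∑ z, ∑ S : Fin n → Z, ((D z).toReal * |sampleWeight D S - sampleWeight D' S|
            + |(D z).toReal - (D' z).toReal| * sampleWeight D' S) := by
          rw [sum_fin_succ_pi]
          exact sum_le_sum fun z _ => sum_le_sum fun S _ => hterm z S
      _ ≤ ∑ z, ((D z).toReal * (n * ∑ z, |(D z).toReal - (D' z).toReal|)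
            + |(D z).toReal - (D' z).toReal|) := by
          refine sum_le_sum fun z _ => ?_
          rw [sum_add_distrib, ← mul_sum, ← mul_sum, sum_sampleWeight, mul_one]
          gcongr
      _ = _ := by
          rw [sum_add_distrib, ← sum_mul, sum_toReal_pmf_eq_one]
          push_cast
          ring

variable [DecidableEq Z]

noncomputable def empFreq (W : Finset Z) {n : ℕ} (S : Fin n → Z) : ℝ := #{k | S k ∈ W} / n

lemma sum_sampleWeight_mul_sq_empFreq_sub (W : Finset Z) {n : ℕ} (hn : 0 < n) :
    ∑ S : Fin n → Z, sampleWeight D S * (empFreq W S - ∑ z ∈ W, (D z).toReal) ^ 2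
      = (∑ z ∈ W, (D z).toReal - (∑ z ∈ W, (D z).toReal) ^ 2) / n := by
  set p := ∑ z ∈ W, (D z).toReal
  set f : Z → ℝ := fun z => (if z ∈ W then 1 else 0) - p
  have hp : ∑ z, (D z).toReal * (if z ∈ W then 1 else 0) = p := by
    simp [p, mul_ite, sum_ite_mem]
  have hf : ∑ z, (D z).toReal * f z = 0 := by
    simp only [f, mul_sub, sum_sub_distrib, hp, ← sum_mul, sum_toReal_pmf_eq_one, one_mul,
      sub_self]
  have hf2 : ∑ z, (D z).toReal * f z ^ 2 = p - p ^ 2 := by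
    have : ∀ z, (D z).toReal * f z ^ 2
        = (D z).toReal * (if z ∈ W then 1 else 0) * (1 - 2 * p) + (D z).toReal * p ^ 2 := by
      intro z
      simp only [f]
      split_ifs <;> ring
    simp only [this, sum_add_distrib, ← sum_mul, hp, sum_toReal_pmf_eq_one]
    ring
  have hnR : (0 : ℝ) < n := by exact_mod_cast hn
  have hsum : ∀ S : Fin n → Z, empFreq W S - p = (∑ k, f (S k)) / n := by
    intro S
    simp only [f, sum_sub_distrib, sum_boole, sum_const, card_univ, Fintype.card_fin,
      nsmul_eq_mul, empFreq]
    field_simp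
  simp only [hsum, div_pow, mul_div_assoc', ← sum_div, sum_sampleWeight_mul_sum_sq D f hf, hf2]
  field_simp

lemma sum_sampleWeight_filter_lt_abs_empFreq_sub_le (W : Finset Z) {n : ℕ} (hn : 0 < n)
    {η : ℝ} (hη : 0 < η) :
    ∑ S : Fin n → Z with η < |empFreq W S - ∑ z ∈ W, (D z).toReal|, sampleWeight D S
      ≤ 1 / (4 * n * η ^ 2) := by
  set p := ∑ z ∈ W, (D z).toReal
  have hnR : (0 : ℝ) < n := by exact_mod_cast hn
  calc _ ≤ ∑ S : Fin n → Z with η < |empFreq W S - p|,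
          sampleWeight D S * (empFreq W S - p) ^ 2 / η ^ 2 :=
        sum_le_sum fun S hS => by
          rw [le_div_iff₀ (by positivity)]
          have := sampleWeight_nonneg D S
          have : η ^ 2 ≤ (empFreq W S - p) ^ 2 := by
            rw [← sq_abs (_ - p)]
            exact pow_le_pow_left₀ hη.le (mem_filter.mp hS).2.le 2
          gcongr
    _ ≤ ∑ S : Fin n → Z, sampleWeight D S * (empFreq W S - p) ^ 2 / η ^ 2 :=
        sum_le_sum_of_subset_of_nonneg (filter_subset _ _) fun S _ _ => by
          have := sampleWeight_nonneg D S
          positivity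
    _ = (p - p ^ 2) / n / η ^ 2 := by
        rw [← sum_div, sum_sampleWeight_mul_sq_empFreq_sub D W hn]
    _ ≤ 1 / 4 / n / η ^ 2 := by
        gcongr
        nlinarith [sq_nonneg (p - 1 / 2)]
    _ = 1 / (4 * n * η ^ 2) := by field_simp

lemma sum_filter_exists_le {ι α : Type*} [Fintype α] (s : Finset ι) (w : α → ℝ)
    (hw : ∀ a, 0 ≤ w a) (P : ι → α → Prop) [∀ i, DecidablePred (P i)] :
    ∑ a with ∃ i ∈ s, P i a, w a ≤ ∑ i ∈ s, ∑ a with P i a, w a := by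
  simp only [sum_filter]
  rw [sum_comm]
  refine sum_le_sum fun a _ => ?_
  split_ifs with h
  · obtain ⟨i, hi, hPi⟩ := h
    exact (if_pos hPi).symm.le.trans
      (single_le_sum (f := fun i => if P i a then w a else 0)
        (fun j _ => by split_ifs <;> simp [hw]) hi)
  · exact sum_nonneg fun i _ => by split_ifs <;> simp [hw]

lemma sum_sampleWeight_filter_not_forall_le {ι : Type*} (s : Finset ι) (W : ι → Finset Z)
    {n : ℕ} (hn : 0 < n) {η : ℝ} (hη : 0 < η) :
    ∑ S : Fin n → Z with ¬ ∀ i ∈ s, |empFreq (W i) S - ∑ z ∈ W i, (D z).toReal| ≤ η,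
        sampleWeight D S
      ≤ #s / (4 * n * η ^ 2) := by
  simp only [not_forall, not_le, exists_prop]
  calc _ ≤ ∑ i ∈ s,
          ∑ S : Fin n → Z with η < |empFreq (W i) S - ∑ z ∈ W i, (D z).toReal|,
            sampleWeight D S :=
        sum_filter_exists_le s _ (sampleWeight_nonneg D) _
    _ ≤ ∑ _i ∈ s, 1 / (4 * n * η ^ 2) :=
        sum_le_sum fun i _ => sum_sampleWeight_filter_lt_abs_empFreq_sub_le D (W i) hn hη
    _ = #s / (4 * n * η ^ 2) := by rw [sum_const, nsmul_eq_mul, mul_one_div]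

lemma one_sub_le_sum_sampleWeight_filter_forall {ι : Type*} (s : Finset ι) (W : ι → Finset Z)
    {n : ℕ} (hn : 0 < n) {η : ℝ} (hη : 0 < η) :
    1 - #s / (4 * n * η ^ 2) ≤
      ∑ S : Fin n → Z with ∀ i ∈ s, |empFreq (W i) S - ∑ z ∈ W i, (D z).toReal| ≤ η,
        sampleWeight D S := by
  have hsplit := sum_filter_add_sum_filter_not univ
    (fun S : Fin n → Z => ∀ i ∈ s, |empFreq (W i) S - ∑ z ∈ W i, (D z).toReal| ≤ η)
    (sampleWeight D)
  rw [sum_sampleWeight] at hsplit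
  linarith [sum_sampleWeight_filter_not_forall_le D s W hn hη]

end SampleWeight

section Loss

variable {X : Type*}

lemma popLoss_pure (z : X × Bool) (h : X → Bool) :
    popLoss (PMF.pure z) h = if h z.1 = z.2 then 0 else 1 := by
  simp [popLoss, PMF.toOuterMeasure_pure_apply]

lemma apply_eq_of_popLoss_pure_lt_one {z : X × Bool} {h : X → Bool}
    (hh : popLoss (PMF.pure z) h < 1) : h z.1 = z.2 := by
  by_contra hne
  simp [popLoss_pure, hne] at hh

lemma popLoss_eq_sum [Fintype X] (D : PMF (X × Bool)) (h : X → Bool) :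
    popLoss D h = ∑ z with h z.1 ≠ z.2, D z := by
  rw [popLoss, ← PMF.toOuterMeasure_apply_finset]
  congr 1
  ext
  simp

variable {H : Set (X → Bool)} {D : PMF (X × Bool)} {h : X → Bool}

lemma realizable_of_popLoss_eq_zero (hh : h ∈ H) (h0 : popLoss D h = 0) : Realizable H D :=
  fun _ hε => ⟨h, hh, h0 ▸ hε⟩

lemma realizable_pure (hh : h ∈ H) (x : X) : Realizable H (PMF.pure (x, h x)) :=
  realizable_of_popLoss_eq_zero hh (by simp [popLoss_pure])

lemma Realizable.exists_popLoss_eq_zero (hD : Realizable H D) (hH : H.Finite) :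
    ∃ h ∈ H, popLoss D h = 0 := by
  obtain ⟨h₁, hh₁, -⟩ := hD 1 one_pos
  obtain ⟨h, hh, hmin⟩ :=
    hH.toFinset.exists_min_image (popLoss D) ⟨h₁, hH.mem_toFinset.2 hh₁⟩
  refine ⟨h, hH.mem_toFinset.1 hh, ?_⟩
  by_contra hne
  obtain ⟨h', hh', hlt⟩ := hD _ (pos_iff_ne_zero.2 hne)
  exact (hmin h' (hH.mem_toFinset.2 hh')).not_gt hlt

end Loss

section OutProb

variable {X : Type*}

lemma outProb_empty (D : PMF (X × Bool)) {n : ℕ} (A : Sample X n → PMF (X → Bool)) :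
    outProb D A ∅ = 0 := by
  simp [outProb]

variable [Fintype X] (D D' : PMF (X × Bool)) {n : ℕ} (A : Sample X n → PMF (X → Bool))

lemma outProb_le_one (E : Set (X → Bool)) : outProb D A E ≤ 1 := by
  rw [outProb, tsum_fintype]
  calc _ ≤ ∑ S, ENNReal.ofReal (sampleWeight D S) := sum_le_sum fun S _ => by
          rw [prod_pmf_eq_ofReal_sampleWeight]
          exact mul_le_of_le_one_right' (toOuterMeasure_le_one _ _)
    _ = 1 := by
          rw [← ENNReal.ofReal_sum_of_nonneg fun S _ => sampleWeight_nonneg D S,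
            sum_sampleWeight, ENNReal.ofReal_one]

lemma toReal_outProb_singleton (h : X → Bool) :
    (outProb D A {h}).toReal = ∑ S, sampleWeight D S * (A S h).toReal := by
  rw [outProb, tsum_fintype, ENNReal.toReal_sum fun S _ => ENNReal.mul_ne_top
    (ENNReal.prod_ne_top fun k _ => D.apply_ne_top _)
    (by rw [PMF.toOuterMeasure_apply_singleton]; exact (A S).apply_ne_top h)]
  refine sum_congr rfl fun S _ => ?_
  rw [PMF.toOuterMeasure_apply_singleton, ENNReal.toReal_mul, prod_pmf_eq_ofReal_sampleWeight,
    ENNReal.toReal_ofReal (sampleWeight_nonneg _ _)]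

lemma toReal_outProb_singleton_add_le_one {h h' : X → Bool} (hne : h ≠ h') :
    (outProb D A {h}).toReal + (outProb D A {h'}).toReal ≤ 1 := by
  rw [toReal_outProb_singleton, toReal_outProb_singleton, ← sum_add_distrib]
  calc _ ≤ ∑ S, sampleWeight D S * 1 := sum_le_sum fun S _ => by
          rw [← mul_add]
          exact mul_le_mul_of_nonneg_left (toReal_pmf_add_le_one _ hne) (sampleWeight_nonneg D S)
    _ = 1 := by simp [sum_sampleWeight]

lemma eq_of_one_lt_toReal_outProb_add {h h' : X → Bool}
    (hlt : 1 < (outProb D A {h}).toReal + (outProb D A {h'}).toReal) : h = h' := by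
  by_contra hne
  exact (toReal_outProb_singleton_add_le_one D A hne).not_gt hlt

lemma abs_toReal_outProb_sub_le (h : X → Bool) :
    |(outProb D A {h}).toReal - (outProb D' A {h}).toReal|
      ≤ n * ∑ z, |(D z).toReal - (D' z).toReal| := by
  rw [toReal_outProb_singleton, toReal_outProb_singleton, ← sum_sub_distrib]
  refine (abs_sum_le_sum_abs _ _).trans ((sum_le_sum fun S _ => ?_).trans
    (sum_abs_sampleWeight_sub_le D D' n))
  rw [← sub_mul, abs_mul]
  refine mul_le_of_le_one_right (abs_nonneg _) ?_
  rw [abs_of_nonneg ENNReal.toReal_nonneg]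
  exact ENNReal.toReal_le_of_le_ofReal zero_le_one (by simpa using (A S).coe_le_one h)

lemma ofReal_sum_sampleWeight_le_outProb_pure (out : Sample X n → X → Bool)
    {E : Set (X → Bool)} {G : Finset (Sample X n)} (hG : ∀ S ∈ G, out S ∈ E) :
    ENNReal.ofReal (∑ S ∈ G, sampleWeight D S) ≤ outProb D (fun S => PMF.pure (out S)) E := by
  rw [ENNReal.ofReal_sum_of_nonneg fun S _ => sampleWeight_nonneg D S, outProb, tsum_fintype]
  calc _ = ∑ S ∈ G, (∏ k, D (S k)) * (PMF.pure (out S)).toOuterMeasure E :=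
        sum_congr rfl fun S hS => by
          rw [PMF.toOuterMeasure_pure_apply, if_pos (hG S hS), mul_one,
            prod_pmf_eq_ofReal_sampleWeight]
    _ ≤ _ := sum_le_sum_of_subset (subset_univ G)

end OutProb

section Mixture

variable {α : Type*} [Fintype α]

noncomputable def mixture (s : unitInterval) (D D' : PMF α) : PMF α :=
  PMF.ofFintype (fun a => ENNReal.ofReal (1 - s) * D a + ENNReal.ofReal s * D' a) <| by
    have hD := D.tsum_coe
    have hD' := D'.tsum_coe
    rw [tsum_fintype] at hD hD'
    rw [sum_add_distrib, ← mul_sum, ← mul_sum, hD, hD', mul_one, mul_one,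
      ← ENNReal.ofReal_add (sub_nonneg.2 s.2.2) s.2.1, sub_add_cancel, ENNReal.ofReal_one]

variable (s : unitInterval) (D D' : PMF α)

lemma toReal_mixture_apply (a : α) :
    (mixture s D D' a).toReal = (1 - s) * (D a).toReal + s * (D' a).toReal := by
  rw [mixture, PMF.ofFintype_apply,
    ENNReal.toReal_add (ENNReal.mul_ne_top ENNReal.ofReal_ne_top (D.apply_ne_top a))
      (ENNReal.mul_ne_top ENNReal.ofReal_ne_top (D'.apply_ne_top a)),
    ENNReal.toReal_mul, ENNReal.toReal_mul, ENNReal.toReal_ofReal (sub_nonneg.2 s.2.2),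
    ENNReal.toReal_ofReal s.2.1]

lemma mixture_zero : mixture 0 D D' = D := PMF.ext fun a => by simp [mixture]

lemma mixture_one : mixture 1 D D' = D' := PMF.ext fun a => by simp [mixture]

lemma sum_abs_toReal_mixture_sub_le (s' : unitInterval) :
    ∑ a, |(mixture s D D' a).toReal - (mixture s' D D' a).toReal| ≤ 2 * |(s : ℝ) - s'| := by
  calc _ = ∑ a, |(s : ℝ) - s'| * |(D a).toReal - (D' a).toReal| := sum_congr rfl fun a _ => by
          rw [toReal_mixture_apply, toReal_mixture_apply, abs_sub_comm (s : ℝ), ← abs_mul]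
          congr 1
          ring
    _ ≤ ∑ a, |(s : ℝ) - s'| * ((D a).toReal + (D' a).toReal) := by
          gcongr with a
          simpa only [abs_of_nonneg ENNReal.toReal_nonneg] using abs_sub (D a).toReal (D' a).toReal
    _ = 2 * |(s : ℝ) - s'| := by
          rw [← mul_sum, sum_add_distrib, sum_toReal_pmf_eq_one, sum_toReal_pmf_eq_one]
          ring

lemma popLoss_mixture {X : Type*} [Fintype X] (D D' : PMF (X × Bool)) (h : X → Bool) :
    popLoss (mixture s D D') h
      = ENNReal.ofReal (1 - s) * popLoss D h + ENNReal.ofReal s * popLoss D' h := by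
  simp only [popLoss_eq_sum, mixture, PMF.ofFintype_apply, sum_add_distrib, mul_sum]

end Mixture

section SingleOutput

variable {X : Type*} [Fintype X] {n : ℕ} (A : Sample X n → PMF (X → Bool))

/-- Each step moves the output probability of a fixed hypothesis by at most `1/8`, while two
distinct hypotheses cannot both have probability above `1/2`. -/
lemma eq_of_likely_of_chain {K : ℕ} (D : ℕ → PMF (X × Bool))
    (hstep : ∀ k < K, n * ∑ z, |(D k z).toReal - (D (k + 1) z).toReal| ≤ 1 / 8)
    (hlikely : ∀ k ≤ K, ∃ h, 3 / 4 ≤ (outProb (D k) A {h}).toReal)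
    {h h' : X → Bool} (h₀ : 3 / 4 ≤ (outProb (D 0) A {h}).toReal)
    (hK : 3 / 4 ≤ (outProb (D K) A {h'}).toReal) : h = h' := by
  have key : ∀ k ≤ K, 3 / 4 ≤ (outProb (D k) A {h}).toReal := by
    intro k hk
    induction k with
    | zero => exact h₀
    | succ k ih =>
      obtain ⟨h'', hh''⟩ := hlikely (k + 1) hk
      have hlip := abs_le.1 ((abs_toReal_outProb_sub_le (D k) (D (k + 1)) A h).trans
        (hstep k (by omega)))
      obtain rfl : h = h'' :=
        eq_of_one_lt_toReal_outProb_add (D (k + 1)) A (by linarith [ih (by omega), hlip.2])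
      exact hh''
  exact eq_of_one_lt_toReal_outProb_add (D K) A (by linarith [key K le_rfl])

lemma eq_of_likely_of_mixture {D D' : PMF (X × Bool)}
    (hlikely : ∀ s, ∃ h, 3 / 4 ≤ (outProb (mixture s D D') A {h}).toReal)
    {h h' : X → Bool} (h₀ : 3 / 4 ≤ (outProb D A {h}).toReal)
    (h₁ : 3 / 4 ≤ (outProb D' A {h'}).toReal) : h = h' := by
  set K := 16 * n + 1
  have hK : (0 : ℝ) < K := by positivity
  let grid : ℕ → unitInterval := fun k => Set.projIcc 0 1 zero_le_one (k / K)
  have hgrid : ∀ k ≤ K, (grid k : ℝ) = k / K := fun k hk => by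
    simp only [grid]
    rw [Set.projIcc_of_mem _ ⟨by positivity, (div_le_one hK).2 (by exact_mod_cast hk)⟩]
  have hgrid₀ : grid 0 = 0 := Subtype.ext (by simp [hgrid 0 (Nat.zero_le K)])
  have hgridK : grid K = 1 := Subtype.ext (by simp [hgrid K le_rfl, hK.ne'])
  refine eq_of_likely_of_chain A (fun k => mixture (grid k) D D') (K := K) (fun k hk => ?_)
    (fun k _ => hlikely _) (by simpa [hgrid₀, mixture_zero] using h₀)
    (by simpa [hgridK, mixture_one] using h₁)
  calc _ ≤ (n : ℝ) * (2 * |(grid k : ℝ) - grid (k + 1)|) := by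
        gcongr
        exact sum_abs_toReal_mixture_sub_le _ _ _ _
    _ = 2 * n / K := by
        rw [hgrid k hk.le, hgrid (k + 1) hk, ← sub_div, abs_div, abs_of_pos hK]
        push_cast
        rw [show (k : ℝ) - (k + 1) = -1 by ring]
        simp only [abs_neg, abs_one]
        ring
    _ ≤ 1 / 8 := by
        rw [div_le_div_iff₀ hK (by norm_num)]
        simp only [K]
        push_cast
        linarith

lemma eq_of_likely_of_pure {H : Set (X → Bool)}
    (hlikely : ∀ D, Realizable H D → ∃ h, 3 / 4 ≤ (outProb D A {h}).toReal)
    {f : X → Bool} (hf : f ∈ H) {x x' : X} {h h' : X → Bool}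
    (h₀ : 3 / 4 ≤ (outProb (PMF.pure (x, f x)) A {h}).toReal)
    (h₁ : 3 / 4 ≤ (outProb (PMF.pure (x', f x')) A {h'}).toReal) : h = h' :=
  eq_of_likely_of_mixture A (fun s => hlikely _ (realizable_of_popLoss_eq_zero hf
    (by simp [popLoss_mixture, popLoss_pure]))) h₀ h₁

end SingleOutput

section ListNumber

variable {X : Type*} {H : Set (X → Bool)}

lemma IsProperListLearner.exists_likely_output [Fintype X] {A : LearningRule X} {ε : ℝ}
    (hA : IsProperListLearner H A ε 1) :
    ∃ n, ∀ D, Realizable H D → ∃ h ∈ H,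
      popLoss D h ≤ ENNReal.ofReal ε ∧ 3 / 4 ≤ (outProb D (A n) {h}).toReal := by
  obtain ⟨n, hn⟩ := hA.2 (1 / 4) (by norm_num)
  refine ⟨n, fun D hD => ?_⟩
  obtain ⟨hs, hmem, hloss, hprob⟩ := hn D hD
  rw [Set.range_unique, ENNReal.ofReal_le_iff_le_toReal
    (ne_top_of_le_ne_top ENNReal.one_ne_top (outProb_le_one _ _ _))] at hprob
  exact ⟨hs default, hmem default, hloss default, by linarith⟩

lemma not_isProperListLearner_zero {D : PMF (X × Bool)} (hD : Realizable H D)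
    (A : LearningRule X) (ε : ℝ) : ¬ IsProperListLearner H A ε 0 := by
  rintro ⟨-, hA⟩
  obtain ⟨n, hn⟩ := hA (1 / 2) (by norm_num)
  obtain ⟨hs, -, -, hprob⟩ := hn D hD
  rw [Set.range_eq_empty, outProb_empty] at hprob
  exact (ENNReal.ofReal_pos.2 (by norm_num)).not_ge hprob

lemma properListNumber_le {l : ℕ}
    (h : ∀ ε : ℝ, 0 < ε → ∃ A : LearningRule X, IsProperListLearner H A ε l) :
    properListNumber H ≤ l :=
  sInf_le ⟨l, rfl, h⟩

lemma le_properListNumber {l : ℕ}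
    (h : ∀ l' < l, ∃ ε : ℝ, 0 < ε ∧
      ∀ A : LearningRule X, ¬ IsProperListLearner H A ε l') :
    (l : ℕ∞) ≤ properListNumber H := by
  refine le_sInf ?_
  rintro _ ⟨l', rfl, hl'⟩
  by_contra hlt
  obtain ⟨ε, hε, hA⟩ := h l' (by exact_mod_cast not_le.1 hlt)
  obtain ⟨A, hA'⟩ := hl' ε hε
  exact hA A hA'

end ListNumber

section SoftCount

noncomputable def ramp (a b p : ℝ) : ℝ := max 0 (min 1 ((b - p) / (b - a)))

variable {a b : ℝ}

lemma ramp_nonneg (p : ℝ) : 0 ≤ ramp a b p := le_max_left _ _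

lemma ramp_le_one (p : ℝ) : ramp a b p ≤ 1 := max_le zero_le_one (min_le_left _ _)

lemma ramp_eq_one (hab : a < b) {p : ℝ} (hp : p ≤ a) : ramp a b p = 1 := by
  rw [ramp, min_eq_left ((one_le_div (sub_pos.2 hab)).2 (by linarith)), max_eq_right zero_le_one]

lemma ramp_eq_zero (hab : a < b) {p : ℝ} (hp : b ≤ p) : ramp a b p = 0 :=
  max_eq_left ((min_le_right _ _).trans
    (div_nonpos_of_nonpos_of_nonneg (by linarith) (by linarith)))

lemma abs_ramp_sub_le (hab : a < b) (p q : ℝ) :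
    |ramp a b p - ramp a b q| ≤ |p - q| / (b - a) := by
  calc _ ≤ |min 1 ((b - p) / (b - a)) - min 1 ((b - q) / (b - a))| := by
        simpa only [ramp, max_comm (0 : ℝ)] using abs_max_sub_max_le_abs _ _ 0
    _ ≤ |(b - p) / (b - a) - (b - q) / (b - a)| := by
        simpa using abs_min_sub_min_le_max 1 ((b - p) / (b - a)) 1 ((b - q) / (b - a))
    _ = |p - q| / (b - a) := by
        rw [← sub_div, abs_div, abs_of_pos (sub_pos.2 hab), abs_sub_comm]
        ring_nf

/-- A Lipschitz substitute for the number of `i < t` with `v i ≤ a`. -/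
noncomputable def softCount (a b : ℝ) (t : ℕ) (v : ℕ → ℝ) : ℝ :=
  ∑ i ∈ range t, ramp a b (v i)

variable {t m : ℕ} {v : ℕ → ℝ}

lemma sub_le_softCount (hab : a < b) (hm : m ≤ t) (hv : ∀ i, m ≤ i → i < t → v i ≤ a) :
    (t : ℝ) - m ≤ softCount a b t v := by
  rw [softCount, ← sum_range_add_sum_Ico _ hm,
    sum_congr rfl fun i hi => ramp_eq_one hab (hv i (mem_Ico.1 hi).1 (mem_Ico.1 hi).2)]
  have := sum_nonneg fun i (_ : i ∈ range m) => ramp_nonneg (a := a) (b := b) (v i)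
  simp only [sum_const, Nat.card_Ico, nsmul_eq_mul, mul_one, Nat.cast_sub hm]
  linarith

lemma softCount_le_sub (hab : a < b) (hm : m ≤ t) (hv : ∀ i < m, b ≤ v i) :
    softCount a b t v ≤ t - m := by
  rw [softCount, ← sum_range_add_sum_Ico _ hm,
    sum_eq_zero fun i hi => ramp_eq_zero hab (hv i (mem_range.1 hi)), zero_add]
  calc _ ≤ ∑ _i ∈ Ico m t, (1 : ℝ) := sum_le_sum fun i _ => ramp_le_one _
    _ = t - m := by simp [Nat.cast_sub hm]

lemma abs_softCount_sub_le (hab : a < b) {w : ℕ → ℝ} {η : ℝ}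
    (hvw : ∀ i ∈ range t, |v i - w i| ≤ η) :
    |softCount a b t v - softCount a b t w| ≤ t * (η / (b - a)) := by
  rw [softCount, softCount, ← sum_sub_distrib]
  calc _ ≤ ∑ i ∈ range t, |ramp a b (v i) - ramp a b (w i)| := abs_sum_le_sum_abs _ _
    _ ≤ ∑ _i ∈ range t, η / (b - a) := sum_le_sum fun i hi =>
        (abs_ramp_sub_le hab _ _).trans (by gcongr; exact hvw i hi)
    _ = t * (η / (b - a)) := by simp

end SoftCount

lemma ceil_eq_or_eq_add_one_of_abs_sub_le {x y : ℝ} (h : |x - y| ≤ 1 / 2) :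
    ⌈x⌉ = ⌈y - 1 / 2⌉ ∨ ⌈x⌉ = ⌈y - 1 / 2⌉ + 1 := by
  obtain ⟨h₁, h₂⟩ := abs_le.1 h
  have hlo : ⌈y - 1 / 2⌉ ≤ ⌈x⌉ := Int.ceil_mono (by linarith)
  have hhi : ⌈x⌉ ≤ ⌈y - 1 / 2⌉ + 1 := by
    rw [← Int.ceil_add_one]
    exact Int.ceil_mono (by linarith)
  omega

section Thresholds

variable {t : ℕ}

def threshold (t k : ℕ) : Fin (t - 1) → Bool := fun x => decide (k ≤ (x : ℕ))

lemma threshold_mem_thresholdClass (ht : 0 < t) (k : ℕ) : threshold t k ∈ thresholdClass t :=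
  ⟨⟨min k (t - 1), by omega⟩, funext fun x => decide_eq_decide.2
    (show k ≤ (x : ℕ) ↔ min k (t - 1) ≤ x by have := x.2; omega)⟩

lemma thresholdClass_finite : (thresholdClass t).Finite :=
  (Set.finite_range fun i : Fin t => threshold t i).subset
    (by rintro h ⟨i, rfl⟩; exact ⟨i, rfl⟩)

lemma exists_threshold_popLoss_eq_zero {D : PMF (Fin (t - 1) × Bool)}
    (hD : Realizable (thresholdClass t) D) : ∃ m < t, popLoss D (threshold t m) = 0 := by
  obtain ⟨h, ⟨i, rfl⟩, h0⟩ := hD.exists_popLoss_eq_zero thresholdClass_finite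
  exact ⟨i, i.2, h0⟩

theorem not_isProperListLearner_thresholdClass_one (ht : 2 < t) {ε : ℝ} (hε : ε < 1)
    (A : LearningRule (Fin (t - 1))) : ¬ IsProperListLearner (thresholdClass t) A ε 1 := by
  intro hA
  obtain ⟨n, hlikely⟩ := hA.exists_likely_output
  have hlikely' : ∀ D, Realizable (thresholdClass t) D →
      ∃ h, 3 / 4 ≤ (outProb D (A n) {h}).toReal := fun D hD =>
    (hlikely D hD).imp fun _ h => h.2.2
  have hτ : ∀ k, threshold t k ∈ thresholdClass t := threshold_mem_thresholdClass (by omega)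
  let x₀ : Fin (t - 1) := ⟨0, by omega⟩
  let x₁ : Fin (t - 1) := ⟨1, by omega⟩
  obtain ⟨h₀, hh₀, hl₀, hp₀⟩ :=
    hlikely (PMF.pure (x₀, true)) (realizable_pure (hτ 0) x₀)
  obtain ⟨h₁, -, -, hp₁⟩ := hlikely (PMF.pure (x₁, true)) (realizable_pure (hτ 1) x₁)
  obtain ⟨h₂, -, -, hp₂⟩ := hlikely (PMF.pure (x₀, false)) (realizable_pure (hτ 2) x₀)
  obtain ⟨h₃, -, hl₃, hp₃⟩ :=
    hlikely (PMF.pure (x₁, false)) (realizable_pure (hτ 2) x₁)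
  have h₀₃ : h₀ = h₃ :=
    ((eq_of_likely_of_pure (A n) hlikely' (hτ 0) (x := x₀) (x' := x₁) hp₀ hp₁).trans
      (eq_of_likely_of_pure (A n) hlikely' (hτ 1) (x := x₁) (x' := x₀) hp₁ hp₂)).trans
      (eq_of_likely_of_pure (A n) hlikely' (hτ 2) (x := x₀) (x' := x₁) hp₂ hp₃)
  have hε' : ENNReal.ofReal ε < 1 := ENNReal.ofReal_lt_one.2 hε
  have e₀ : h₀ x₀ = true := apply_eq_of_popLoss_pure_lt_one (hl₀.trans_lt hε')
  have e₁ : h₀ x₁ = false := h₀₃ ▸ apply_eq_of_popLoss_pure_lt_one (hl₃.trans_lt hε')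
  obtain ⟨i, rfl⟩ := hh₀
  simp only [x₀, x₁, decide_eq_true_eq, decide_eq_false_iff_not] at e₀ e₁
  omega

def negTail (t i : ℕ) : Finset (Fin (t - 1) × Bool) := {z | z.2 = false ∧ i ≤ (z.1 : ℕ)}

noncomputable def negTailMass (D : PMF (Fin (t - 1) × Bool)) (i : ℕ) : ℝ :=
  ∑ z ∈ negTail t i, (D z).toReal

variable {D : PMF (Fin (t - 1) × Bool)}

lemma negTailMass_anti : Antitone (negTailMass D) := fun i j hij =>
  sum_le_sum_of_subset_of_nonneg
    (fun z hz => by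
      simp only [negTail, mem_filter, mem_univ, true_and] at hz ⊢
      exact ⟨hz.1, hij.trans hz.2⟩)
    fun _ _ _ => ENNReal.toReal_nonneg

lemma toOuterMeasure_negTail (i : ℕ) :
    D.toOuterMeasure (negTail t i) = ENNReal.ofReal (negTailMass D i) := by
  rw [PMF.toOuterMeasure_apply_finset, negTailMass,
    ← ENNReal.toReal_sum fun z _ => D.apply_ne_top z,
    ENNReal.ofReal_toReal (ENNReal.sum_ne_top.2 fun z _ => D.apply_ne_top z)]

lemma negTailMass_eq_zero {m : ℕ} (hm : popLoss D (threshold t m) = 0) :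
    negTailMass D m = 0 := by
  have : D.toOuterMeasure (negTail t m) ≤ popLoss D (threshold t m) :=
    MeasureTheory.measure_mono fun z hz => by simp_all [negTail, threshold]
  rw [hm, nonpos_iff_eq_zero, toOuterMeasure_negTail, ENNReal.ofReal_eq_zero] at this
  exact this.antisymm (sum_nonneg fun _ _ => ENNReal.toReal_nonneg)

/-- The positive examples below `j` carry no mass, since `threshold t m` errs on them. -/
lemma popLoss_threshold_le {m j : ℕ} (hm : popLoss D (threshold t m) = 0) (hjm : j ≤ m) :
    popLoss D (threshold t j) ≤ ENNReal.ofReal (negTailMass D j) := by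
  calc popLoss D (threshold t j)
      ≤ D.toOuterMeasure ({z | threshold t m z.1 ≠ z.2} ∪ negTail t j) :=
        MeasureTheory.measure_mono fun z hz => by
          obtain ⟨x, _ | _⟩ := z <;>
            simp_all only [threshold, negTail, ne_eq, decide_eq_true_eq, decide_eq_false_iff_not,
              not_le, coe_filter, mem_univ, true_and, Set.mem_ofPred_eq, Set.mem_union,
              Bool.true_eq_false, false_and, or_false] <;>
            omega
    _ ≤ popLoss D (threshold t m) + D.toOuterMeasure (negTail t j) :=
        MeasureTheory.measure_union_le _ _
    _ = _ := by rw [hm, zero_add, toOuterMeasure_negTail]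

variable {ε : ℝ}

/-- Chosen so that the `t` ramps from `η` to `ε - η` move the soft count by at most `1/2`
when every coordinate moves by at most `η`. -/
noncomputable def tailTol (t : ℕ) (ε : ℝ) : ℝ := ε / (4 * t)

noncomputable def tailScore (t : ℕ) (ε : ℝ) (v : ℕ → ℝ) : ℝ :=
  softCount (tailTol t ε) (ε - tailTol t ε) t v

noncomputable def learnedThreshold (t : ℕ) (ε : ℝ) {n : ℕ} (S : Sample (Fin (t - 1)) n) :
    Fin (t - 1) → Bool :=
  threshold t ((t : ℤ) - ⌈tailScore t ε fun i => empFreq (negTail t i) S⌉).toNat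

noncomputable def thresholdLearner (t : ℕ) (ε : ℝ) : LearningRule (Fin (t - 1)) :=
  fun _ S => PMF.pure (learnedThreshold t ε S)

lemma tailTol_pos (ht : 0 < t) (hε : 0 < ε) : 0 < tailTol t ε := by
  unfold tailTol
  positivity

lemma tailTol_lt (ht : 0 < t) (hε : 0 < ε) : tailTol t ε < ε - tailTol t ε := by
  have : (1 : ℝ) ≤ t := by exact_mod_cast ht
  rw [tailTol, lt_sub_iff_add_lt, ← two_mul, mul_div_assoc', div_lt_iff₀ (by positivity)]
  nlinarith

lemma mul_tailTol_div_le (ht : 0 < t) (hε : 0 < ε) :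
    t * (tailTol t ε / (ε - tailTol t ε - tailTol t ε)) ≤ 1 / 2 := by
  have : (1 : ℝ) ≤ t := by exact_mod_cast ht
  have hgap : ε / 2 ≤ ε - tailTol t ε - tailTol t ε := by
    rw [tailTol, div_le_iff₀ two_pos]
    have : ε / (4 * t) ≤ ε / 4 := div_le_div_of_nonneg_left hε.le (by norm_num) (by linarith)
    linarith
  have htη : (t : ℝ) * tailTol t ε = ε / 4 := by
    rw [tailTol]
    field_simp
  rw [← mul_div_assoc, div_le_iff₀ (by linarith), htη]
  linarith

lemma ceil_tailScore_mem (ht : 0 < t) (hε : 0 < ε) {m m₂ : ℕ} (hmt : m ≤ t)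
    (hm₂ : m₂ ≤ m) (hm : negTailMass D m = 0) (hsmall : ∀ i < m₂, ε ≤ negTailMass D i)
    {v : ℕ → ℝ} (hv : ∀ i ∈ range t, |v i - negTailMass D i| ≤ tailTol t ε) :
    (t : ℤ) - m ≤ ⌈tailScore t ε v⌉ ∧ ⌈tailScore t ε v⌉ ≤ (t : ℤ) - m₂ ∧
      (⌈tailScore t ε v⌉ = ⌈tailScore t ε (negTailMass D) - 1 / 2⌉ ∨
        ⌈tailScore t ε v⌉ = ⌈tailScore t ε (negTailMass D) - 1 / 2⌉ + 1) := by
  have hab := tailTol_lt ht hε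
  have hlo : (t : ℝ) - m ≤ tailScore t ε v :=
    sub_le_softCount hab hmt fun i hi hit => by
      linarith [(abs_le.1 (hv i (mem_range.2 hit))).2, negTailMass_anti (D := D) hi]
  have hhi : tailScore t ε v ≤ t - m₂ :=
    softCount_le_sub hab (hm₂.trans hmt) fun i hi => by
      linarith [(abs_le.1 (hv i (mem_range.2 (by omega)))).1, hsmall i hi]
  refine ⟨?_, Int.ceil_le.2 (by push_cast; exact hhi), ceil_eq_or_eq_add_one_of_abs_sub_le
    ((abs_softCount_sub_le hab hv).trans (mul_tailTol_div_le ht hε))⟩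
  exact (Int.ceil_intCast _).symm.le.trans (Int.ceil_mono (by push_cast; exact hlo))

lemma exists_list_learnedThreshold (ht : 0 < t) (hε : 0 < ε)
    (hD : Realizable (thresholdClass t) D) :
    ∃ hs : Fin 2 → Fin (t - 1) → Bool, (∀ ℓ, hs ℓ ∈ thresholdClass t) ∧
      (∀ ℓ, popLoss D (hs ℓ) ≤ ENNReal.ofReal ε) ∧
      ∀ {n : ℕ} (S : Sample (Fin (t - 1)) n),
        (∀ i ∈ range t, |empFreq (negTail t i) S - negTailMass D i| ≤ tailTol t ε) →
        learnedThreshold t ε S ∈ Set.range hs := by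
  obtain ⟨m, hmt, hm⟩ := exists_threshold_popLoss_eq_zero hD
  have hm0 := negTailMass_eq_zero hm
  have hmε : negTailMass D m < ε := hm0 ▸ hε
  have hex : ∃ i, negTailMass D i < ε := ⟨m, hmε⟩
  classical
  obtain ⟨m₂, hm₂, hm₂ε, hsmall⟩ : ∃ m₂ ≤ m, negTailMass D m₂ < ε ∧
      ∀ i < m₂, ε ≤ negTailMass D i :=
    ⟨Nat.find hex, Nat.find_min' hex hmε, Nat.find_spec hex,
      fun i hi => not_lt.1 (Nat.find_min hex hi)⟩
  set g := ⌈tailScore t ε (negTailMass D) - 1 / 2⌉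
  -- the two possible values of `⌈c⌉` on accurate samples, clamped as in `ceil_tailScore_mem`
  let C : Fin 2 → ℤ := fun ℓ => max ((t : ℤ) - m) (min ((t : ℤ) - m₂) (g + ℓ))
  refine ⟨fun ℓ => threshold t ((t : ℤ) - C ℓ).toNat,
    fun ℓ => threshold_mem_thresholdClass ht _, fun ℓ => ?_, fun S hS => ?_⟩
  · have hC : (t : ℤ) - m ≤ C ℓ ∧ C ℓ ≤ (t : ℤ) - m₂ :=
      ⟨le_max_left _ _, max_le (by omega) (min_le_left _ _)⟩
    have hj : m₂ ≤ ((t : ℤ) - C ℓ).toNat ∧ ((t : ℤ) - C ℓ).toNat ≤ m := by omega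
    refine (popLoss_threshold_le hm hj.2).trans (ENNReal.ofReal_le_ofReal ?_)
    linarith [negTailMass_anti (D := D) hj.1]
  · obtain ⟨hlo, hhi, hg⟩ := ceil_tailScore_mem ht hε hmt.le hm₂ hm0 hsmall hS
    obtain ⟨ℓ, hℓ⟩ :
        ∃ ℓ, C ℓ = ⌈tailScore t ε fun i => empFreq (negTail t i) S⌉ := by
      rcases hg with hg | hg
      exacts [⟨0, by simp only [C, Fin.val_zero, Nat.cast_zero, add_zero]; omega⟩,
        ⟨1, by simp only [C, Fin.val_one, Nat.cast_one]; omega⟩]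
    exact ⟨ℓ, by simp only [learnedThreshold, hℓ]⟩

theorem isProperListLearner_thresholdLearner (ht : 0 < t) (hε : 0 < ε) :
    IsProperListLearner (thresholdClass t) (thresholdLearner t ε) ε 2 := by
  refine ⟨fun n S => by
    simp [thresholdLearner, learnedThreshold, threshold_mem_thresholdClass ht], fun δ hδ => ?_⟩
  have hη := tailTol_pos ht hε
  obtain ⟨n, hn, hnδ⟩ : ∃ n : ℕ, 0 < n ∧ t / (4 * n * tailTol t ε ^ 2) ≤ δ := by
    refine ⟨⌈t / (4 * δ * tailTol t ε ^ 2)⌉₊ + 1, by omega, ?_⟩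
    have hc : (t : ℝ) / (4 * δ * tailTol t ε ^ 2)
        ≤ (⌈t / (4 * δ * tailTol t ε ^ 2)⌉₊ + 1 : ℕ) :=
      (Nat.le_ceil _).trans (by push_cast; linarith)
    rw [div_le_iff₀ (by positivity)] at hc ⊢
    linarith
  refine ⟨n, fun D hD => ?_⟩
  obtain ⟨hs, hmem, hloss, hcover⟩ := exists_list_learnedThreshold ht hε hD
  refine ⟨hs, hmem, hloss, (ENNReal.ofReal_le_ofReal ?_).trans
    (ofReal_sum_sampleWeight_le_outProb_pure D _ (G := {S | ∀ i ∈ range t,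
      |empFreq (negTail t i) S - negTailMass D i| ≤ tailTol t ε})
      fun S hS => hcover S (mem_filter.1 hS).2)⟩
  have := one_sub_le_sum_sampleWeight_filter_forall D (range t) (negTail t) hn hη
  rw [card_range] at this
  exact (sub_le_sub_left hnδ 1).trans this

end Thresholds

/-- for every `t > 2`, the class of thresholds over `[t-1]` has proper list
replicability number exactly `2`. -/
theorem stmt_4 (t : ℕ) (ht : 2 < t) :
    properListNumber (thresholdClass t) = 2 := by
  refine le_antisymm (properListNumber_le fun ε hε =>
    ⟨_, isProperListLearner_thresholdLearner (by omega) hε⟩) (le_properListNumber ?_)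
  intro l hl
  refine ⟨1 / 2, by norm_num, fun A => ?_⟩
  interval_cases l
  · exact not_isProperListLearner_zero
      (realizable_pure (threshold_mem_thresholdClass (by omega) 0) ⟨0, by omega⟩) A _
  · exact not_isProperListLearner_thresholdClass_one ht (by norm_num) A

end Replicability
end

section
/- If a hypothesis class H has VC dimension d < ∞ with d ≥ 1, then there exists an instability witness of size d − 1 for H with respect to the class {−1,+1}^X of all predictors. -/
/-! Enumerate a shattered set of size `d` as `x₀, x₁, …, x_{d-1}` and take `W(j, b) = (x_{j+1}, b)`
with centre `(x₀, +1)`: shattering realizes `+1` at `x₀` together with any labels at the other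
points. A predictor `f` goes to `F_0` if it labels every `x_{j+1}` by `+1`, and otherwise to
`F_{j+1}` for some `j` with `f(x_{j+1}) = -1`. -/

open scoped ENNReal

namespace Replicability

variable {X : Type*}

theorem exists_shatters_card_eq_of_VCDim_eq {H : Set (X → Bool)} {d : ℕ} (hd : 0 < d)
    (hvc : VCDim H = d) : ∃ s : Finset X, Shatters H s ∧ s.card = d := by
  set S := {d : ℕ∞ | ∃ s : Finset X, Shatters H s ∧ d = s.card}
  have hSup : sSup S = d := hvc
  have : Nonempty S := by
    refine (Set.nonempty_iff_ne_empty.2 fun hempty => ?_).to_subtype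
    rw [hempty, sSup_empty, bot_eq_zero] at hSup
    exact hd.ne' (mod_cast hSup.symm)
  obtain ⟨s, hs, hcard⟩ : sSup S ∈ S :=
    ENat.sSup_mem_of_nonempty_of_lt_top (hSup ▸ ENat.natCast_lt_top d)
  exact ⟨s, hs, by exact_mod_cast hcard.symm.trans hSup⟩

theorem Shatters.exists_embedding {H : Set (X → Bool)} {s : Finset X} (hs : Shatters H s)
    {n : ℕ} (hn : s.card = n) :
    ∃ e : Fin n ↪ X, ∀ σ : Fin n → Bool, ∃ h ∈ H, ∀ i, h (e i) = σ i := by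
  let e : Fin n ↪ X :=
    ((Fin.castOrderIso hn).symm.toEquiv.trans s.equivFin.symm).toEmbedding.trans
      (Function.Embedding.subtype _)
  refine ⟨e, fun σ => ?_⟩
  obtain ⟨h, hH, hag⟩ := hs (Function.extend e σ fun _ => true)
  refine ⟨h, hH, fun i => ?_⟩
  rw [hag (e i) (s.equivFin.symm _).2]
  exact e.injective.extend_apply _ _ i

theorem exists_center_of_embedding {H : Set (X → Bool)} {k : ℕ} (e : Fin (k + 1) ↪ X)
    (he : ∀ σ : Fin (k + 1) → Bool, ∃ h ∈ H, ∀ i, h (e i) = σ i) :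
    ∃ xy : X × Bool, ∀ σ : Fin k → Bool, ∃ h ∈ H, h xy.1 = xy.2 ∧
      ∀ j : Fin k, (e j.succ, σ j) ≠ xy ∧ h (e j.succ) = σ j := by
  refine ⟨(e 0, true), fun σ => ?_⟩
  obtain ⟨h, hH, hag⟩ := he (Fin.cons true σ)
  refine ⟨h, hH, by simpa using hag 0, fun j => ⟨?_, by simpa using hag j.succ⟩⟩
  simp [Fin.succ_ne_zero]

theorem exists_partition_by_false_point (p : Fin k → X) :
    ∃ F' : Fin (k + 1) → Set (X → Bool),
      (∀ f : X → Bool, ∃! i, f ∈ F' i) ∧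
      (∀ j, ∀ f ∈ F' 0, f (p j) ≠ false) ∧
      (∀ j, ∀ f ∈ F' j.succ, f (p j) ≠ true) := by
  classical
  let c : (X → Bool) → Fin (k + 1) := fun f =>
    if h : ∃ j, f (p j) = false then h.choose.succ else 0
  refine ⟨fun i => {f | c f = i}, fun f => ⟨c f, rfl, fun _ hi => hi.symm⟩, ?_, ?_⟩
  · intro j f hf hfalse
    have hex : ∃ j, f (p j) = false := ⟨j, hfalse⟩
    exact Fin.succ_ne_zero _ ((dif_pos hex : c f = _).symm.trans hf)
  · intro j f hf
    have hex : ∃ j, f (p j) = false := by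
      by_contra hex
      exact Fin.succ_ne_zero j (hf.symm.trans (dif_neg hex))
    have hj : hex.choose = j := Fin.succ_injective _ ((dif_pos hex : c f = _).symm.trans hf)
    simpa [hj] using hex.choose_spec

theorem stmt_14_general {X : Type*} (H : Set (X → Bool)) (d : ℕ) (hd : 1 ≤ d)
    (hvc : VCDim H = (d : ℕ∞)) :
    ∃ W : Fin (d - 1) × Bool → X × Bool,
      IsInstabilityWitness H (Set.univ : Set (X → Bool)) (d - 1) W := by
  obtain ⟨s, hs, hcard⟩ := exists_shatters_card_eq_of_VCDim_eq hd hvc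
  obtain ⟨e, he⟩ := hs.exists_embedding (n := d - 1 + 1) (by omega)
  obtain ⟨F', hpart, hzero, hsucc⟩ := exists_partition_by_false_point fun j => e j.succ
  exact ⟨fun jb => (e jb.1.succ, jb.2), exists_center_of_embedding e he,
    F', fun _ => Set.subset_univ _, fun f _ => hpart f, hzero, hsucc⟩

/-- a class of VC dimension `d ≥ 1` admits an instability witness of size
`d - 1` with respect to the class of all predictors. -/
theorem stmt_14 {X : Type*} [Countable X] (H : Set (X → Bool)) (d : ℕ) (hd : 1 ≤ d)
    (hvc : VCDim H = (d : ℕ∞)) :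
    ∃ W : Fin (d - 1) × Bool → X × Bool,
      IsInstabilityWitness H (Set.univ : Set (X → Bool)) (d - 1) W :=
  stmt_14_general H d hd hvc

end Replicability
end
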